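/- arXiv:2406.02199 — 6 statements merged into one kernel-verified Lean document; each statement's English description precedes it below -/
import Mathlib

section
/- If a finite graph H is strongly transitive, then H is distance-transitive and its diameter is at most 2. -/
/-!
The counting conditions only matter through positivity of the counts: automorphisms of `H`
act transitively on vertices, on ordered edges and on ordered non-edges. For a connected pair
`(u, v)` the distance `0`, `1` or `≥ 2` tells which of these three orbits it lies in, which gives
distance-transitivity. If some connected pair had distance at least `3`, a shortest path between
them would contain a non-edge `(x, b)` at distance `2`; the automorphism carrying `(u, v)` to
`(x, b)` preserves distance, a contradiction.
-/

namespace SimpleGraph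

variable {V W : Type*} {G : SimpleGraph V} {G' : SimpleGraph W}

theorem edist_map_le (f : G →g G') (u v : V) : G'.edist (f u) (f v) ≤ G.edist u v :=
  le_iInf fun p => (edist_le (p.map f)).trans_eq (by rw [Walk.length_map])

theorem Iso.edist_map (φ : G ≃g G') (u v : V) : G'.edist (φ u) (φ v) = G.edist u v :=
  le_antisymm (edist_map_le φ.toHom u v) (by simpa using edist_map_le φ.symm.toHom (φ u) (φ v))

theorem Iso.dist_map (φ : G ≃g G') (u v : V) : G'.dist (φ u) (φ v) = G.dist u v :=
  congrArg ENat.toNat (φ.edist_map u v)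

def IsVertexTransitive (H : SimpleGraph V) : Prop :=
  ∀ u v : V, ∃ φ : H ≃g H, φ u = v

def AutTransitiveOnAdj (H G : SimpleGraph V) : Prop :=
  ∀ ⦃u v u' v' : V⦄, G.Adj u v → G.Adj u' v' → ∃ φ : H ≃g H, φ u = u' ∧ φ v = v'

variable {H : SimpleGraph V} {u v u' v' : V}

theorem AutTransitiveOnAdj.dist_le_two (hN : H.AutTransitiveOnAdj Hᶜ) (hr : H.Reachable u v) :
    H.dist u v ≤ 2 := by
  by_contra! hlt
  obtain ⟨p, hp⟩ := hr.exists_walk_length_eq_dist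
  obtain ⟨x, a, b, hxa, hab, hxb, hxb_ne⟩ := p.exists_adj_adj_not_adj_ne hp (by omega)
  have huv : Hᶜ.Adj u v :=
    ⟨by rintro rfl; simp at hlt, fun hadj => by simp [dist_eq_one_iff_adj.2 hadj] at hlt⟩
  obtain ⟨φ, rfl, rfl⟩ := hN huv ⟨hxb_ne, hxb⟩
  have h_two := H.dist_le (.cons hxa (.cons hab .nil))
  rw [φ.dist_map] at h_two
  simp at h_two
  omega

theorem exists_iso_of_dist_eq (hV : H.IsVertexTransitive) (hE : H.AutTransitiveOnAdj H)
    (hN : H.AutTransitiveOnAdj Hᶜ) (hr : H.Reachable u v) (hr' : H.Reachable u' v')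
    (hd : H.dist u v = H.dist u' v') : ∃ φ : H ≃g H, φ u = u' ∧ φ v = v' := by
  by_cases huv : u = v
  · subst huv
    have hu' : u' = v' := hr'.dist_eq_zero_iff.1 (by rw [← hd, dist_self])
    obtain ⟨φ, hφ⟩ := hV u u'
    exact ⟨φ, hφ, hu' ▸ hφ⟩
  by_cases hadj : H.Adj u v
  · exact hE hadj (dist_eq_one_iff_adj.1 (hd ▸ dist_eq_one_iff_adj.2 hadj))
  have hu' : u' ≠ v' := fun h => huv (hr.dist_eq_zero_iff.1 (by rw [hd, h, dist_self]))
  have hadj' : ¬H.Adj u' v' := fun h => hadj (dist_eq_one_iff_adj.1 (hd ▸ dist_eq_one_iff_adj.2 h))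
  exact hN ⟨huv, hadj⟩ ⟨hu', hadj'⟩

theorem exists_iso_of_natCard_pos {S : Set (Equiv.Perm V)}
    (hS : ∀ e ∈ S, ∀ u v : V, H.Adj (e u) (e v) ↔ H.Adj u v) {P : Equiv.Perm V → Prop}
    (hP : 0 < Nat.card {e : Equiv.Perm V // e ∈ S ∧ P e}) : ∃ φ : H ≃g H, P φ.toEquiv := by
  obtain ⟨⟨e, he, hPe⟩⟩ := (Nat.card_pos_iff.1 hP).1
  exact ⟨⟨e, hS e he _ _⟩, hPe⟩

end SimpleGraph

theorem stmt_4_general {V : Type*} (H : SimpleGraph V)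
    (hstrong : ∃ (S : Set (Equiv.Perm V)) (d₁ d₂ d₃ : ℕ),
      (∀ e ∈ S, ∀ u v : V, H.Adj (e u) (e v) ↔ H.Adj u v) ∧
      1 ≤ d₁ ∧ 1 ≤ d₂ ∧ 1 ≤ d₃ ∧
      (∀ h h' : V, Nat.card {e : Equiv.Perm V // e ∈ S ∧ e h = h'} = d₁) ∧
      (∀ h₁ h₂ h₁' h₂' : V, H.Adj h₁ h₂ → H.Adj h₁' h₂' →
        Nat.card {e : Equiv.Perm V // e ∈ S ∧ e h₁ = h₁' ∧ e h₂ = h₂'} = d₂) ∧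
      (∀ h₁ h₂ h₁' h₂' : V, Hᶜ.Adj h₁ h₂ → Hᶜ.Adj h₁' h₂' →
        Nat.card {e : Equiv.Perm V // e ∈ S ∧ e h₁ = h₁' ∧ e h₂ = h₂'} = d₃)) :
    (∀ h₁ h₂ h₁' h₂' : V, H.Reachable h₁ h₂ → H.Reachable h₁' h₂' →
      H.dist h₁ h₂ = H.dist h₁' h₂' →
      ∃ φ : H ≃g H, φ h₁ = h₁' ∧ φ h₂ = h₂') ∧
    (∀ u v : V, H.Reachable u v → H.dist u v ≤ 2) := by
  obtain ⟨S, d₁, d₂, d₃, hS, hd₁, hd₂, hd₃, hc₁, hc₂, hc₃⟩ := hstrong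
  have hV : H.IsVertexTransitive := fun u v =>
    SimpleGraph.exists_iso_of_natCard_pos hS (hd₁.trans_eq (hc₁ u v).symm)
  have hE : H.AutTransitiveOnAdj H := fun _ _ _ _ h h' =>
    SimpleGraph.exists_iso_of_natCard_pos hS (hd₂.trans_eq (hc₂ _ _ _ _ h h').symm)
  have hN : H.AutTransitiveOnAdj Hᶜ := fun _ _ _ _ h h' =>
    SimpleGraph.exists_iso_of_natCard_pos hS (hd₃.trans_eq (hc₃ _ _ _ _ h h').symm)
  exact ⟨fun _ _ _ _ hr hr' hd => SimpleGraph.exists_iso_of_dist_eq hV hE hN hr hr' hd,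
    fun _ _ => hN.dist_le_two⟩

/-- If a finite graph `H` is strongly transitive, then it is distance-transitive
and its diameter is at most 2 (every pair of connected vertices has distance at
most 2). -/
theorem stmt_4 {V : Type*} [Fintype V] (H : SimpleGraph V)
    (hstrong : ∃ (S : Set (Equiv.Perm V)) (d₁ d₂ d₃ : ℕ),
      (∀ e ∈ S, ∀ u v : V, H.Adj (e u) (e v) ↔ H.Adj u v) ∧
      1 ≤ d₁ ∧ 1 ≤ d₂ ∧ 1 ≤ d₃ ∧
      (∀ h h' : V, Nat.card {e : Equiv.Perm V // e ∈ S ∧ e h = h'} = d₁) ∧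
      (∀ h₁ h₂ h₁' h₂' : V, H.Adj h₁ h₂ → H.Adj h₁' h₂' →
        Nat.card {e : Equiv.Perm V // e ∈ S ∧ e h₁ = h₁' ∧ e h₂ = h₂'} = d₂) ∧
      (∀ h₁ h₂ h₁' h₂' : V, Hᶜ.Adj h₁ h₂ → Hᶜ.Adj h₁' h₂' →
        Nat.card {e : Equiv.Perm V // e ∈ S ∧ e h₁ = h₁' ∧ e h₂ = h₂'} = d₃)) :
    (∀ h₁ h₂ h₁' h₂' : V, H.Reachable h₁ h₂ → H.Reachable h₁' h₂' →
      H.dist h₁ h₂ = H.dist h₁' h₂' →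
      ∃ φ : H ≃g H, φ h₁ = h₁' ∧ φ h₂ = h₂') ∧
    (∀ u v : V, H.Reachable u v → H.dist u v ≤ 2) :=
  stmt_4_general H hstrong
end

section
/- Let G, H be finite graphs with a common equitable partition given by cells C_1,...,C_k of G and D_1,...,D_k of H, with |C_i| = |D_i| = n_i and parameters c_ij. Define the strategy P(h_A, h_B | g_A, g_B) to be 1/n_i if g_A = g_B, h_A = h_B, g_A ∈ C_i, h_A ∈ D_i; 1/(n_i c_ij) if g_A ~ g_B, h_A ~ h_B, g_A ∈ C_i, g_B ∈ C_j, h_A ∈ D_i, h_B ∈ D_j; 1/(n_i c̄_ij) if g_A and g_B are distinct and non-adjacent, h_A and h_B are distinct and non-adjacent, with the same cell conditions (where c̄_ij = n_j − c_ij − δ_ij); and 0 otherwise. Then for every pair of inputs (g_A, g_B), the function (h_A, h_B) ↦ P(h_A, h_B | g_A, g_B) is a probability distribution, i.e., nonnegative and summing to 1 over all (h_A, h_B) ∈ V(H)². -/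
/-! On inputs `(gA, gB)` the strategy is uniform on the pairs `(hA, hB)` with `hA` in the cell
of `gA`, `hB` in the cell of `gB`, and `hB` related to `hA` as `gB` is to `gA` (equal, adjacent,
or distinct and non-adjacent). Equitability makes the number of admissible `hB` the same for
every such `hA`, namely `1`, `c i j` or `c̄ i j`; the same count in `G` is positive since `gB`
itself is admissible for `gA`, so every normalising factor is nonzero. -/

open Finset
open scoped Classical

/-- The canonical non-signalling strategy for the `(G, H)` isomorphism game
built from a common equitable partition, following Atserias et al.  Here
`ι : V → Fin k` and `κ : W → Fin k` assign to each vertex the index of its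
cell, `n i` is the common cell size, `c i j` the partition parameters, and
`c̄ i j = n j - c i j - δ_ij`.  The value `canonicalStrategy G H ι κ n c gA gB hA hB`
is the probability that the players answer `(hA, hB)` on inputs `(gA, gB)`. -/
noncomputable def canonicalStrategy {V W : Type*} (G : SimpleGraph V) (H : SimpleGraph W)
    {k : ℕ} (ι : V → Fin k) (κ : W → Fin k) (n : Fin k → ℕ) (c : Fin k → Fin k → ℕ)
    (gA gB : V) (hA hB : W) : ℝ :=
  if gA = gB ∧ hA = hB ∧ κ hA = ι gA then ((n (ι gA) : ℝ))⁻¹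
  else if G.Adj gA gB ∧ H.Adj hA hB ∧ κ hA = ι gA ∧ κ hB = ι gB then
    ((n (ι gA) : ℝ) * (c (ι gA) (ι gB) : ℝ))⁻¹
  else if gA ≠ gB ∧ ¬ G.Adj gA gB ∧ hA ≠ hB ∧ ¬ H.Adj hA hB ∧ κ hA = ι gA ∧ κ hB = ι gB then
    ((n (ι gA) : ℝ) *
      ((n (ι gB) - c (ι gA) (ι gB) - (if ι gA = ι gB then 1 else 0) : ℕ) : ℝ))⁻¹
  else 0

section EquitablePartition

variable {V : Type*} [Fintype V] (G : SimpleGraph V) {k : ℕ} (ι : V → Fin k)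
  {n : Fin k → ℕ} {c : Fin k → Fin k → ℕ}

lemma cell_size_ne_zero (hCn : ∀ i, #{v | ι v = i} = n i) (v : V) : n (ι v) ≠ 0 := by
  rw [← hCn]
  exact (card_pos.mpr ⟨v, by simp⟩).ne'

lemma card_fiber_filter_eq (j : Fin k) (v : V) :
    #{u | ι u = j ∧ u = v} = if ι v = j then 1 else 0 := by
  rw [← card_singleton v, ← card_empty (α := V), ← apply_ite card]
  congr 1
  ext u
  split_ifs with h
  · simp only [mem_filter, mem_univ, true_and, mem_singleton]
    exact ⟨And.right, by rintro rfl; exact ⟨h, rfl⟩⟩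
  · simp only [mem_filter, mem_univ, true_and, notMem_empty, iff_false]
    rintro ⟨hu, rfl⟩
    exact h hu

lemma card_fiber_filter_ne_not_adj (hCn : ∀ i, #{v | ι v = i} = n i)
    (hCe : ∀ j v, #{u | ι u = j ∧ G.Adj v u} = c (ι v) j) (j : Fin k) (v : V) :
    #{u | ι u = j ∧ u ≠ v ∧ ¬G.Adj v u} = n j - c (ι v) j - if ι v = j then 1 else 0 := by
  have hsplit := card_filter_add_card_filter_not (s := {u | ι u = j})
    (p := fun u => u = v ∨ G.Adj v u)
  have hclose : #{u | ι u = j ∧ (u = v ∨ G.Adj v u)}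
      = #{u | ι u = j ∧ u = v} + #{u | ι u = j ∧ G.Adj v u} := by
    rw [← card_union_of_disjoint]
    · congr 1
      ext u
      simp only [mem_filter, mem_union, mem_univ, true_and]
      tauto
    · rw [disjoint_filter]
      rintro u - ⟨-, rfl⟩ ⟨-, h⟩
      exact G.irrefl h
  simp only [filter_filter, not_or] at hsplit
  simp only [ne_eq]
  rw [hclose, card_fiber_filter_eq, hCe, hCn] at hsplit
  omega

end EquitablePartition

lemma sum_sum_eq_one_of_uniform {W : Type*} [Fintype W] (f : W → W → ℝ)
    (A : W → Prop) (R : W → W → Prop) [DecidablePred A] [DecidableRel R] {N m : ℕ}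
    (hN : N ≠ 0) (hm : m ≠ 0)
    (hA : #{a | A a} = N) (hR : ∀ a, A a → #{b | R a b} = m)
    (hf : ∀ a b, f a b = if A a ∧ R a b then ((N : ℝ) * m)⁻¹ else 0) :
    ∑ a, ∑ b, f a b = 1 := by
  calc ∑ a, ∑ b, f a b = ∑ a, if A a then (m : ℝ) * ((N : ℝ) * m)⁻¹ else 0 := by
        refine sum_congr rfl fun a _ => ?_
        simp only [hf, ite_and]
        split_ifs with ha
        · rw [← sum_filter, sum_const, hR a ha, nsmul_eq_mul]
        · exact sum_const_zero
    _ = 1 := by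
        rw [← sum_filter, sum_const, hA, nsmul_eq_mul]
        field_simp

/-- The canonical strategy from a common equitable partition is, for every pair
of inputs, a probability distribution on output pairs: nonnegative and summing
to 1. -/
theorem stmt_13 {V W : Type*} [Fintype V] [Fintype W]
    (G : SimpleGraph V) (H : SimpleGraph W) {k : ℕ}
    (ι : V → Fin k) (κ : W → Fin k) (n : Fin k → ℕ) (c : Fin k → Fin k → ℕ)
    (hCn : ∀ i, (Finset.univ.filter (fun v : V => ι v = i)).card = n i)
    (hDn : ∀ i, (Finset.univ.filter (fun w : W => κ w = i)).card = n i)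
    (hCe : ∀ (j : Fin k) (v : V),
      (Finset.univ.filter (fun u : V => ι u = j ∧ G.Adj v u)).card = c (ι v) j)
    (hDe : ∀ (j : Fin k) (w : W),
      (Finset.univ.filter (fun u : W => κ u = j ∧ H.Adj w u)).card = c (κ w) j) :
    ∀ gA gB : V,
      (∀ hA hB : W, 0 ≤ canonicalStrategy G H ι κ n c gA gB hA hB) ∧
      (∑ hA : W, ∑ hB : W, canonicalStrategy G H ι κ n c gA gB hA hB = 1) := by
  intro gA gB
  have hnA := cell_size_ne_zero ι hCn gA
  refine ⟨fun hA hB => ?_, ?_⟩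
  · unfold canonicalStrategy
    split_ifs <;> positivity
  rcases eq_or_ne gA gB with rfl | hne
  · refine sum_sum_eq_one_of_uniform _ (fun a => κ a = ι gA) (fun a b => a = b) hnA
      one_ne_zero (hDn _) (fun a _ => ?_) (fun a b => ?_)
    · exact card_eq_one.mpr ⟨a, by ext; simp [eq_comm]⟩
    · simp [canonicalStrategy, and_comm]
  by_cases hadj : G.Adj gA gB
  · have hc : c (ι gA) (ι gB) ≠ 0 := by
      rw [← hCe]
      exact (card_pos.mpr ⟨gB, by simp [hadj]⟩).ne'
    refine sum_sum_eq_one_of_uniform _ (fun a => κ a = ι gA)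
      (fun a b => κ b = ι gB ∧ H.Adj a b) hnA hc (hDn _) (fun a ha => ha ▸ hDe _ a)
      (fun a b => ?_)
    simp only [canonicalStrategy, hne, hadj, false_and, true_and, and_false, not_true_eq_false,
      reduceIte]
    exact if_congr (by tauto) rfl rfl
  · have hc : n (ι gB) - c (ι gA) (ι gB) - (if ι gA = ι gB then 1 else 0) ≠ 0 := by
      rw [← card_fiber_filter_ne_not_adj G ι hCn hCe]
      exact (card_pos.mpr ⟨gB, by simp [hne.symm, hadj]⟩).ne'
    refine sum_sum_eq_one_of_uniform _ (fun a => κ a = ι gA)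
      (fun a b => κ b = ι gB ∧ b ≠ a ∧ ¬H.Adj a b) hnA hc (hDn _)
      (fun a ha => ha ▸ card_fiber_filter_ne_not_adj H κ hDn hDe _ a) (fun a b => ?_)
    simp only [canonicalStrategy, hne, hadj, false_and, true_and, ne_eq, not_false_eq_true,
      reduceIte]
    exact if_congr (by tauto) rfl rfl
end

section
/- With the strategy P from the common equitable partition (as in the Atserias et al. construction), P is non-signalling: the marginal distribution of Alice's output h_A given inputs (g_A, g_B) depends only on g_A, and symmetrically for Bob. Concretely, for g_A ∈ C_i, the marginal probability of any h_A ∈ D_i is 1/n_i regardless of g_B, and 0 if h_A ∉ D_i. -/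
/-! Once Alice's input `gA ∈ C_i` and answer `hA ∈ D_i` are fixed, the strategy is uniform, with
value `(n_i · |S|)⁻¹`, on a set `S` of Bob's answers: `{hA}`, or the neighbours, or the distinct
non-neighbours of `hA` in `D_j`. Equitability gives `|S| ∈ {1, c_ij, c̄_ij}`, positive because the
corresponding configuration occurs in `G`, so Alice's marginal is `n_i⁻¹`. Double counting the
edges, and the non-edges, between two cells gives `n_i c_ij = n_j c_ji` and
`n_i c̄_ij = n_j c̄_ji`; hence the strategy is invariant under exchanging the players, and Bob's
marginal is Alice's. -/

open Finset
open scoped Classical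

section EquitablePartition

variable {α β : Type*} [Fintype α] [DecidableEq β]

def nonAdjCount (n : β → ℕ) (c : β → β → ℕ) (i j : β) : ℕ :=
  n j - c i j - if i = j then 1 else 0

structure IsEquitablePartition (X : SimpleGraph α) (f : α → β) (n : β → ℕ)
    (c : β → β → ℕ) : Prop where
  card_cell : ∀ i, #{v | f v = i} = n i
  card_adj_cell : ∀ j v, #{u | f u = j ∧ X.Adj v u} = c (f v) j

theorem mul_cellCount_comm_of_symm {f : α → β} {n : β → ℕ}
    (hn : ∀ i, #{v | f v = i} = n i) {R : α → α → Prop} [DecidableRel R] [Std.Symm R]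
    {d : β → β → ℕ} (hd : ∀ j v, #{u | f u = j ∧ R v u} = d (f v) j) (i j : β) :
    n i * d i j = n j * d j i := by
  have hAbove : ∀ i j, ∀ v ∈ ({v | f v = i} : Finset α),
      #(({u | f u = j} : Finset α).bipartiteAbove R v) = d i j := by
    intro i j v hv
    rw [(mem_filter.1 hv).2.symm, ← hd]
    simp only [bipartiteAbove, filter_filter]
  have hBelow : ∀ i j, ∀ v ∈ ({v | f v = i} : Finset α),
      #(({u | f u = j} : Finset α).bipartiteBelow R v) = d i j := by
    intro i j v hv
    simp only [bipartiteBelow, Std.Symm.iff (r := R) _ v]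
    exact hAbove i j v hv
  calc n i * d i j
      = ∑ v ∈ {v | f v = i}, #(({u | f u = j} : Finset α).bipartiteAbove R v) := by
        rw [sum_congr rfl (hAbove i j), sum_const, hn, smul_eq_mul]
    _ = ∑ v ∈ {v | f v = j}, #(({u | f u = i} : Finset α).bipartiteBelow R v) :=
        sum_card_bipartiteAbove_eq_sum_card_bipartiteBelow _
    _ = n j * d j i := by rw [sum_congr rfl (hBelow j i), sum_const, hn, smul_eq_mul]

variable {X : SimpleGraph α} {f : α → β} {n : β → ℕ} {c : β → β → ℕ}

namespace IsEquitablePartition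

theorem card_nonAdj_cell (hX : IsEquitablePartition X f n c) (j : β) (v : α) :
    #{u | f u = j ∧ v ≠ u ∧ ¬X.Adj v u} = nonAdjCount n c (f v) j := by
  have hsplit : #{u | f u = j ∧ v ≠ u ∧ ¬X.Adj v u} + #{u | f u = j ∧ X.Adj v u}
      + #{u | f u = j ∧ v = u} = #{u | f u = j} := by
    simp only [card_filter, ← sum_add_distrib]
    refine sum_congr rfl fun u _ => ?_
    by_cases hvu : v = u
    · subst hvu; simp
    · by_cases hadj : X.Adj v u <;> simp [hvu, hadj]
  have hself : #{u | f u = j ∧ v = u} = if f v = j then 1 else 0 := by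
    rw [filter_and, filter_eq]; split_ifs <;> simp_all
  rw [hX.card_adj_cell, hself, hX.card_cell] at hsplit
  unfold nonAdjCount
  omega

theorem mul_adjCount_comm (hX : IsEquitablePartition X f n c) (i j : β) :
    n i * c i j = n j * c j i :=
  have : Std.Symm X.Adj := X.symm
  mul_cellCount_comm_of_symm hX.card_cell hX.card_adj_cell i j

theorem mul_nonAdjCount_comm (hX : IsEquitablePartition X f n c) (i j : β) :
    n i * nonAdjCount n c i j = n j * nonAdjCount n c j i :=
  have : Std.Symm fun v u => v ≠ u ∧ ¬X.Adj v u :=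
    ⟨fun _ _ h => ⟨h.1.symm, fun h' => h.2 h'.symm⟩⟩
  mul_cellCount_comm_of_symm (R := fun v u => v ≠ u ∧ ¬X.Adj v u) hX.card_cell
    hX.card_nonAdj_cell i j

theorem adjCount_pos (hX : IsEquitablePartition X f n c) {v u : α} (h : X.Adj v u) :
    0 < c (f v) (f u) := by
  rw [← hX.card_adj_cell]
  exact card_pos.2 ⟨u, by simp [h]⟩

theorem nonAdjCount_pos (hX : IsEquitablePartition X f n c) {v u : α} (hne : v ≠ u)
    (h : ¬X.Adj v u) :
    0 < nonAdjCount n c (f v) (f u) := by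
  rw [← hX.card_nonAdj_cell]
  exact card_pos.2 ⟨u, by simp [hne, h]⟩

end IsEquitablePartition

end EquitablePartition

section Strategy

variable {V W : Type*} {G : SimpleGraph V} {H : SimpleGraph W} {k : ℕ}
  {ι : V → Fin k} {κ : W → Fin k} {n : Fin k → ℕ} {c : Fin k → Fin k → ℕ}

theorem canonicalStrategy_eq_zero_of_cell_ne {gA gB : V} {hA : W} (hA_cell : κ hA ≠ ι gA)
    (hB : W) : canonicalStrategy G H ι κ n c gA gB hA hB = 0 := by
  simp [canonicalStrategy, hA_cell]

theorem canonicalStrategy_swap [Fintype V] (hG : IsEquitablePartition G ι n c) (gA gB : V)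
    (hA hB : W) :
    canonicalStrategy G H ι κ n c gB gA hB hA = canonicalStrategy G H ι κ n c gA gB hA hB := by
  by_cases heq : gA = gB
  · subst heq
    by_cases h : hA = hB
    · subst h; rfl
    · simp [canonicalStrategy, h, Ne.symm h]
  have hadjR : (n (ι gB) : ℝ) * c (ι gB) (ι gA) = n (ι gA) * c (ι gA) (ι gB) := by
    exact_mod_cast hG.mul_adjCount_comm (ι gB) (ι gA)
  have hnonAdjR : (n (ι gB) : ℝ) * nonAdjCount n c (ι gB) (ι gA) =
      n (ι gA) * nonAdjCount n c (ι gA) (ι gB) := by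
    exact_mod_cast hG.mul_nonAdjCount_comm (ι gB) (ι gA)
  by_cases hadj : G.Adj gA gB
  · simp [canonicalStrategy, heq, Ne.symm heq, hadj, hadj.symm, hadjR, H.adj_comm, and_comm]
  · simp only [nonAdjCount] at hnonAdjR
    simp only [canonicalStrategy, heq, Ne.symm heq, hadj, mt G.adj_symm hadj, false_and,
      if_false, ne_eq, not_false_eq_true, true_and, hnonAdjR]
    refine if_congr ?_ rfl rfl
    rw [eq_comm, H.adj_comm]
    tauto

variable [Fintype W]

noncomputable def canonicalStrategySupport (G : SimpleGraph V) (H : SimpleGraph W)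
    (ι : V → Fin k) (κ : W → Fin k) (gA gB : V) (hA : W) : Finset W :=
  if gA = gB then {hA}
  else if G.Adj gA gB then ({hB | κ hB = ι gB ∧ H.Adj hA hB} : Finset W)
  else ({hB | κ hB = ι gB ∧ hA ≠ hB ∧ ¬H.Adj hA hB} : Finset W)

theorem card_canonicalStrategySupport (hH : IsEquitablePartition H κ n c) {gA gB : V} {hA : W}
    (hA_cell : κ hA = ι gA) :
    #(canonicalStrategySupport G H ι κ gA gB hA) =
      if gA = gB then 1 else if G.Adj gA gB then c (ι gA) (ι gB)
      else nonAdjCount n c (ι gA) (ι gB) := by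
  rw [← hA_cell, ← hH.card_adj_cell, ← hH.card_nonAdj_cell, canonicalStrategySupport]
  split_ifs <;> rfl

theorem card_canonicalStrategySupport_pos [Fintype V] (hG : IsEquitablePartition G ι n c)
    (hH : IsEquitablePartition H κ n c) {gA gB : V} {hA : W} (hA_cell : κ hA = ι gA) :
    0 < #(canonicalStrategySupport G H ι κ gA gB hA) := by
  rw [card_canonicalStrategySupport hH hA_cell]
  split_ifs with heq hadj
  · exact one_pos
  · exact hG.adjCount_pos hadj
  · exact hG.nonAdjCount_pos heq hadj

theorem canonicalStrategy_eq_of_cell_eq (hH : IsEquitablePartition H κ n c) {gA gB : V}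
    {hA : W} (hA_cell : κ hA = ι gA) (hB : W) :
    canonicalStrategy G H ι κ n c gA gB hA hB =
      if hB ∈ canonicalStrategySupport G H ι κ gA gB hA then
        ((n (ι gA) : ℝ) * #(canonicalStrategySupport G H ι κ gA gB hA))⁻¹
      else 0 := by
  rw [card_canonicalStrategySupport hH hA_cell, canonicalStrategySupport]
  by_cases heq : gA = gB
  · subst heq
    by_cases h : hA = hB
    · subst h; simp [canonicalStrategy, hA_cell]
    · simp [canonicalStrategy, h, Ne.symm h]
  by_cases hadj : G.Adj gA gB
  · simp [canonicalStrategy, hA_cell, heq, hadj, and_comm]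
  · simp [canonicalStrategy, hA_cell, heq, hadj, nonAdjCount, and_comm, and_left_comm]

theorem sum_canonicalStrategy_right [Fintype V] (hG : IsEquitablePartition G ι n c)
    (hH : IsEquitablePartition H κ n c) (gA gB : V) (hA : W) :
    ∑ hB, canonicalStrategy G H ι κ n c gA gB hA hB =
      if κ hA = ι gA then ((n (ι gA) : ℝ))⁻¹ else 0 := by
  by_cases hA_cell : κ hA = ι gA
  · have hpos := card_canonicalStrategySupport_pos (gB := gB) hG hH hA_cell
    simp only [canonicalStrategy_eq_of_cell_eq hH hA_cell, sum_ite_mem, univ_inter, sum_const,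
      nsmul_eq_mul, if_pos hA_cell]
    field_simp
  · simp [canonicalStrategy_eq_zero_of_cell_ne hA_cell, hA_cell]

end Strategy

/-- The canonical strategy from a common equitable partition is non-signalling:
Alice's output marginal does not depend on Bob's input (it is uniform on the
cell `D_{ι gA}` matching her input's cell), and symmetrically for Bob. -/
theorem stmt_14 {V W : Type*} [Fintype V] [Fintype W]
    (G : SimpleGraph V) (H : SimpleGraph W) {k : ℕ}
    (ι : V → Fin k) (κ : W → Fin k) (n : Fin k → ℕ) (c : Fin k → Fin k → ℕ)
    (hCn : ∀ i, (Finset.univ.filter (fun v : V => ι v = i)).card = n i)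
    (hDn : ∀ i, (Finset.univ.filter (fun w : W => κ w = i)).card = n i)
    (hCe : ∀ (j : Fin k) (v : V),
      (Finset.univ.filter (fun u : V => ι u = j ∧ G.Adj v u)).card = c (ι v) j)
    (hDe : ∀ (j : Fin k) (w : W),
      (Finset.univ.filter (fun u : W => κ u = j ∧ H.Adj w u)).card = c (κ w) j) :
    (∀ (gA gB : V) (hA : W),
      ∑ hB : W, canonicalStrategy G H ι κ n c gA gB hA hB =
        if κ hA = ι gA then ((n (ι gA) : ℝ))⁻¹ else 0) ∧
    (∀ (gA gB : V) (hB : W),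
      ∑ hA : W, canonicalStrategy G H ι κ n c gA gB hA hB =
        if κ hB = ι gB then ((n (ι gB) : ℝ))⁻¹ else 0) := by
  have hG : IsEquitablePartition G ι n c := ⟨hCn, hCe⟩
  have hH : IsEquitablePartition H κ n c := ⟨hDn, hDe⟩
  refine ⟨sum_canonicalStrategy_right hG hH, fun gA gB hB => ?_⟩
  rw [← sum_canonicalStrategy_right hG hH gB gA hB]
  exact sum_congr rfl fun hA _ => canonicalStrategy_swap hG gB gA hB hA
end

section
/- Let H = H_1 ⊔ H_2 be a disconnected graph (no edges between H_1 and H_2), let G, H have a common equitable partition with cells C_i, D_i, sizes n_i, parameters c_ij, and assume the proportion |D_i ∩ H_1| / |D_i| is independent of i. Let P be the canonical strategy defined from the common equitable partition. Then for any g_A ∈ C_i, g_B ∈ C_j with g_A, g_B distinct and non-adjacent, the probability under P(·,·|g_A,g_B) that h_A ∈ H_1 and h_B ∈ H_2 equals |D_i ∩ H_1| · |D_j ∩ H_2| / (n_i · c̄_ij), and this equals the probability that h_A ∈ H_2 and h_B ∈ H_1. -/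
open Finset
open scoped Classical

/-!
On distinct non-adjacent inputs the canonical strategy is uniform, with weight
`1 / (n i ⬝ c̄ i j)`, on the pairs of distinct non-adjacent answers lying in the right cells.
Since `H₁` is a union of components, every pair `(hA, hB)` with exactly one of `hA, hB` in `H₁`
is such a pair, so both probabilities are cell counts times that weight:
`|D i ∩ H₁| ⬝ |D j ∩ H₂|` and `|D i ∩ H₂| ⬝ |D j ∩ H₁|` respectively. These agree because
`|D i ∩ H₁| / |D i| = |D j ∩ H₁| / |D j|` and `|D i| = |D i ∩ H₁| + |D i ∩ H₂|`.
-/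

theorem mul_eq_mul_of_div_add_eq_div_add {𝕜 : Type*} [Field 𝕜] [LinearOrder 𝕜]
    [IsStrictOrderedRing 𝕜] {a₁ a₂ b₁ b₂ : 𝕜} (ha₁ : 0 ≤ a₁) (ha₂ : 0 ≤ a₂) (hb₁ : 0 ≤ b₁)
    (hb₂ : 0 ≤ b₂) (h : a₁ / (a₁ + a₂) = b₁ / (b₁ + b₂)) : a₁ * b₂ = a₂ * b₁ := by
  rcases (add_nonneg ha₁ ha₂).eq_or_lt with ha | ha
  · obtain ⟨rfl, rfl⟩ := (add_eq_zero_iff_of_nonneg ha₁ ha₂).1 ha.symm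
    ring
  rcases (add_nonneg hb₁ hb₂).eq_or_lt with hb | hb
  · obtain ⟨rfl, rfl⟩ := (add_eq_zero_iff_of_nonneg hb₁ hb₂).1 hb.symm
    ring
  rw [div_eq_div_iff ha.ne' hb.ne'] at h
  linear_combination h

theorem card_filter_and_mem_add_card_filter_and_not_mem {W : Type*} [Fintype W] {k : ℕ}
    (κ : W → Fin k) (s : Finset W) (i : Fin k) :
    #{w | κ w = i ∧ w ∈ s} + #{w | κ w = i ∧ w ∉ s} = #{w | κ w = i} := by
  rw [← Finset.filter_filter, ← Finset.filter_filter]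
  exact Finset.card_filter_add_card_filter_not _

section CanonicalStrategy

variable {V W : Type*} (G : SimpleGraph V) (H : SimpleGraph W) {k : ℕ}
  (ι : V → Fin k) (κ : W → Fin k) (n : Fin k → ℕ) (c : Fin k → Fin k → ℕ)

theorem canonicalStrategy_of_ne_of_not_adj {gA gB : V} {hA hB : W}
    (hg : gA ≠ gB) (hG : ¬ G.Adj gA gB) (hh : hA ≠ hB) (hH : ¬ H.Adj hA hB) :
    canonicalStrategy G H ι κ n c gA gB hA hB =
      if κ hA = ι gA ∧ κ hB = ι gB then
        ((n (ι gA) : ℝ) *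
          ((n (ι gB) - c (ι gA) (ι gB) - (if ι gA = ι gB then 1 else 0) : ℕ) : ℝ))⁻¹
      else 0 := by
  simp [canonicalStrategy, hg, hG, hh, hH]

theorem sum_sum_canonicalStrategy_of_ne_of_not_adj [Fintype W] {gA gB : V}
    (hg : gA ≠ gB) (hG : ¬ G.Adj gA gB) (s t : Finset W)
    (hst : ∀ a ∈ s, ∀ b ∈ t, a ≠ b ∧ ¬ H.Adj a b) :
    ∑ hA ∈ s, ∑ hB ∈ t, canonicalStrategy G H ι κ n c gA gB hA hB =
      (#{w | κ w = ι gA ∧ w ∈ s} : ℝ) * (#{w | κ w = ι gB ∧ w ∈ t} : ℝ) /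
        ((n (ι gA) : ℝ) *
          ((n (ι gB) - c (ι gA) (ι gB) - (if ι gA = ι gB then 1 else 0) : ℕ) : ℝ)) := by
  rw [Finset.sum_congr rfl fun a ha => Finset.sum_congr rfl fun b hb =>
    canonicalStrategy_of_ne_of_not_adj G H ι κ n c hg hG (hst a ha b hb).1 (hst a ha b hb).2]
  rw [← Finset.sum_product', Finset.sum_ite, Finset.sum_const_zero, add_zero,
    Finset.sum_const, nsmul_eq_mul, Finset.filter_product (p := fun a => κ a = ι gA)
    (q := fun b => κ b = ι gB), Finset.card_product, div_eq_mul_inv]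
  push_cast
  congr 4 <;> ext <;> simp [and_comm]

end CanonicalStrategy

theorem stmt_15_general {V W : Type*} [Fintype W]
    (G : SimpleGraph V) (H : SimpleGraph W) {k : ℕ}
    (ι : V → Fin k) (κ : W → Fin k) (n : Fin k → ℕ) (c : Fin k → Fin k → ℕ)
    (hDn : ∀ i, (Finset.univ.filter (fun w : W => κ w = i)).card = n i)
    (H₁ : Finset W)
    (hcomp : ∀ u v : W, H.Adj u v → (u ∈ H₁ ↔ v ∈ H₁))
    (hprop : ∀ i j : Fin k,
      ((Finset.univ.filter (fun w : W => κ w = i ∧ w ∈ H₁)).card : ℝ) / (n i : ℝ) =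
      ((Finset.univ.filter (fun w : W => κ w = j ∧ w ∈ H₁)).card : ℝ) / (n j : ℝ)) :
    ∀ gA gB : V, gA ≠ gB → ¬ G.Adj gA gB →
      (∑ hA ∈ H₁, ∑ hB ∈ H₁ᶜ, canonicalStrategy G H ι κ n c gA gB hA hB =
        ((Finset.univ.filter (fun w : W => κ w = ι gA ∧ w ∈ H₁)).card : ℝ) *
          ((Finset.univ.filter (fun w : W => κ w = ι gB ∧ w ∉ H₁)).card : ℝ) /
          ((n (ι gA) : ℝ) *
            ((n (ι gB) - c (ι gA) (ι gB) - (if ι gA = ι gB then 1 else 0) : ℕ) : ℝ))) ∧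
      (∑ hA ∈ H₁, ∑ hB ∈ H₁ᶜ, canonicalStrategy G H ι κ n c gA gB hA hB =
        ∑ hA ∈ H₁ᶜ, ∑ hB ∈ H₁, canonicalStrategy G H ι κ n c gA gB hA hB) := by
  intro gA gB hg hG
  have separated : ∀ a b, ¬ (a ∈ H₁ ↔ b ∈ H₁) → a ≠ b ∧ ¬ H.Adj a b := fun a b hab =>
    ⟨by rintro rfl; exact hab Iff.rfl, fun hadj => hab (hcomp a b hadj)⟩
  have h₁₂ := sum_sum_canonicalStrategy_of_ne_of_not_adj G H ι κ n c hg hG H₁ H₁ᶜ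
    fun a ha b hb => separated a b (by simp_all)
  have h₂₁ := sum_sum_canonicalStrategy_of_ne_of_not_adj G H ι κ n c hg hG H₁ᶜ H₁
    fun a ha b hb => separated a b (by simp_all)
  simp only [Finset.mem_compl] at h₁₂ h₂₁
  have hcount : ∀ i, (#{w | κ w = i ∧ w ∈ H₁} : ℝ) + #{w | κ w = i ∧ w ∉ H₁} = n i := fun i => by
    exact_mod_cast (card_filter_and_mem_add_card_filter_and_not_mem κ H₁ i).trans (hDn i)
  have hcross := mul_eq_mul_of_div_add_eq_div_add (by positivity) (by positivity) (by positivity)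
    (by positivity) ((hcount (ι gA)).symm ▸ (hcount (ι gB)).symm ▸ hprop (ι gA) (ι gB))
  exact ⟨h₁₂, by rw [h₁₂, h₂₁, hcross]⟩

/-- Suppose `H = H₁ ⊔ H₂` is disconnected (no edges between `H₁` and its
complement `H₂`), `G, H` have a common equitable partition, and the proportion
`|D i ∩ H₁| / |D i|` is independent of `i` (hypothesis (H)).  Then for distinct
non-adjacent inputs `gA ∈ C i`, `gB ∈ C j`, the probability under the canonical
strategy that `hA ∈ H₁` and `hB ∈ H₂` equals
`|D i ∩ H₁| ⬝ |D j ∩ H₂| / (n i ⬝ c̄ i j)`, and this equals the probability that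
`hA ∈ H₂` and `hB ∈ H₁`. -/
theorem stmt_15 {V W : Type*} [Fintype V] [Fintype W]
    (G : SimpleGraph V) (H : SimpleGraph W) {k : ℕ}
    (ι : V → Fin k) (κ : W → Fin k) (n : Fin k → ℕ) (c : Fin k → Fin k → ℕ)
    (hCn : ∀ i, (Finset.univ.filter (fun v : V => ι v = i)).card = n i)
    (hDn : ∀ i, (Finset.univ.filter (fun w : W => κ w = i)).card = n i)
    (hCe : ∀ (j : Fin k) (v : V),
      (Finset.univ.filter (fun u : V => ι u = j ∧ G.Adj v u)).card = c (ι v) j)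
    (hDe : ∀ (j : Fin k) (w : W),
      (Finset.univ.filter (fun u : W => κ u = j ∧ H.Adj w u)).card = c (κ w) j)
    (H₁ : Finset W)
    (hcomp : ∀ u v : W, H.Adj u v → (u ∈ H₁ ↔ v ∈ H₁))
    (hprop : ∀ i j : Fin k,
      ((Finset.univ.filter (fun w : W => κ w = i ∧ w ∈ H₁)).card : ℝ) / (n i : ℝ) =
      ((Finset.univ.filter (fun w : W => κ w = j ∧ w ∈ H₁)).card : ℝ) / (n j : ℝ)) :
    ∀ gA gB : V, gA ≠ gB → ¬ G.Adj gA gB →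
      (∑ hA ∈ H₁, ∑ hB ∈ H₁ᶜ, canonicalStrategy G H ι κ n c gA gB hA hB =
        ((Finset.univ.filter (fun w : W => κ w = ι gA ∧ w ∈ H₁)).card : ℝ) *
          ((Finset.univ.filter (fun w : W => κ w = ι gB ∧ w ∉ H₁)).card : ℝ) /
          ((n (ι gA) : ℝ) *
            ((n (ι gB) - c (ι gA) (ι gB) - (if ι gA = ι gB then 1 else 0) : ℕ) : ℝ))) ∧
      (∑ hA ∈ H₁, ∑ hB ∈ H₁ᶜ, canonicalStrategy G H ι κ n c gA gB hA hB =
        ∑ hA ∈ H₁ᶜ, ∑ hB ∈ H₁, canonicalStrategy G H ι κ n c gA gB hA hB) :=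
  stmt_15_general G H ι κ n c hDn H₁ hcomp hprop
end

section
/- Under the same setup, for adjacent inputs g_A ~ g_B with g_A ∈ C_i, g_B ∈ C_j, the probability under the canonical strategy P that both outputs lie in H_1 equals |D_i ∩ H_1| / n_i. (Key step: since H_1 and H_2 are disconnected, every neighbor in D_j of a vertex h_A ∈ D_i ∩ H_1 lies in H_1, and there are exactly c_ij of them.) -/
open Finset
open scoped Classical

/-!
On adjacent inputs the strategy is uniform on the edges from `D i` to `D j`, with weight
`1 / (n i * c i j)`, and `c i j ≠ 0` because `gB` is a `C j`-neighbour of `gA`. Since `H₁` is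
closed under adjacency, each `hA ∈ D i ∩ H₁` keeps all `c i j` of its `D j`-neighbours inside
`H₁`, so its row sums to `1 / n i`.
-/

section

variable {V W : Type*} {G : SimpleGraph V} {H : SimpleGraph W} {k : ℕ}
  {ι : V → Fin k} {κ : W → Fin k} {n : Fin k → ℕ} {c : Fin k → Fin k → ℕ}

lemma canonicalStrategy_of_adj {gA gB : V} (hadj : G.Adj gA gB) (hA hB : W) :
    canonicalStrategy G H ι κ n c gA gB hA hB =
      if κ hA = ι gA ∧ κ hB = ι gB ∧ H.Adj hA hB then
        ((n (ι gA) : ℝ) * c (ι gA) (ι gB))⁻¹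
      else 0 := by
  simp only [canonicalStrategy, hadj.ne, hadj, false_and, if_false, true_and, not_true_eq_false,
    ne_eq, not_false_eq_true, and_false]
  exact if_congr (by tauto) rfl rfl

lemma parameter_ne_zero_of_adj [Fintype V]
    (hCe : ∀ (j : Fin k) (v : V),
      (univ.filter (fun u : V => ι u = j ∧ G.Adj v u)).card = c (ι v) j)
    {gA gB : V} (hadj : G.Adj gA gB) : c (ι gA) (ι gB) ≠ 0 := by
  rw [← hCe (ι gB) gA, ← pos_iff_ne_zero, card_pos]
  exact ⟨gB, by simp [hadj]⟩

lemma filter_adj_eq_of_adj_closed [Fintype W] {H₁ : Finset W}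
    (hcomp : ∀ u v : W, H.Adj u v → (u ∈ H₁ ↔ v ∈ H₁)) {w : W} (hw : w ∈ H₁) (j : Fin k) :
    H₁.filter (fun u => κ u = j ∧ H.Adj w u) = univ.filter (fun u => κ u = j ∧ H.Adj w u) := by
  ext u
  simp only [mem_filter, mem_univ, true_and, and_iff_right_iff_imp]
  exact fun ⟨_, hwu⟩ => (hcomp w u hwu).mp hw

lemma sum_canonicalStrategy_of_adj_closed [Fintype V] [Fintype W]
    (hCe : ∀ (j : Fin k) (v : V),
      (univ.filter (fun u : V => ι u = j ∧ G.Adj v u)).card = c (ι v) j)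
    (hDe : ∀ (j : Fin k) (w : W),
      (univ.filter (fun u : W => κ u = j ∧ H.Adj w u)).card = c (κ w) j)
    {H₁ : Finset W} (hcomp : ∀ u v : W, H.Adj u v → (u ∈ H₁ ↔ v ∈ H₁))
    {gA gB : V} (hadj : G.Adj gA gB) {hA : W} (hA₁ : hA ∈ H₁) :
    ∑ hB ∈ H₁, canonicalStrategy G H ι κ n c gA gB hA hB =
      if κ hA = ι gA then ((n (ι gA) : ℝ))⁻¹ else 0 := by
  simp_rw [canonicalStrategy_of_adj hadj]
  by_cases hκ : κ hA = ι gA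
  · have hc : (c (ι gA) (ι gB) : ℝ) ≠ 0 := by exact_mod_cast parameter_ne_zero_of_adj hCe hadj
    simp only [hκ, true_and, if_true]
    rw [← sum_filter, filter_adj_eq_of_adj_closed hcomp hA₁, sum_const, hDe, hκ, nsmul_eq_mul]
    field_simp
  · simp [hκ]

end

theorem stmt_17_general {V W : Type*} [Fintype V] [Fintype W]
    (G : SimpleGraph V) (H : SimpleGraph W) {k : ℕ}
    (ι : V → Fin k) (κ : W → Fin k) (n : Fin k → ℕ) (c : Fin k → Fin k → ℕ)
    (hCe : ∀ (j : Fin k) (v : V),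
      (Finset.univ.filter (fun u : V => ι u = j ∧ G.Adj v u)).card = c (ι v) j)
    (hDe : ∀ (j : Fin k) (w : W),
      (Finset.univ.filter (fun u : W => κ u = j ∧ H.Adj w u)).card = c (κ w) j)
    (H₁ : Finset W)
    (hcomp : ∀ u v : W, H.Adj u v → (u ∈ H₁ ↔ v ∈ H₁)) :
    ∀ gA gB : V, G.Adj gA gB →
      ∑ hA ∈ H₁, ∑ hB ∈ H₁, canonicalStrategy G H ι κ n c gA gB hA hB =
        ((Finset.univ.filter (fun w : W => κ w = ι gA ∧ w ∈ H₁)).card : ℝ) /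
          (n (ι gA) : ℝ) := by
  intro gA gB hadj
  rw [sum_congr rfl fun hA hA₁ => sum_canonicalStrategy_of_adj_closed hCe hDe hcomp hadj hA₁,
    sum_ite, sum_const_zero, add_zero, sum_const, nsmul_eq_mul, div_eq_mul_inv]
  congr 3
  ext w
  simp [and_comm]

/-- For adjacent inputs `gA ~ gB` with `gA ∈ C i`, `gB ∈ C j`, the probability
under the canonical strategy that both outputs lie in `H₁` equals
`|D i ∩ H₁| / n i` (since `H₁` is a union of connected components of `H`,
every neighbor in `D j` of a vertex `hA ∈ D i ∩ H₁` lies in `H₁`, and there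
are exactly `c i j` of them). -/
theorem stmt_17 {V W : Type*} [Fintype V] [Fintype W]
    (G : SimpleGraph V) (H : SimpleGraph W) {k : ℕ}
    (ι : V → Fin k) (κ : W → Fin k) (n : Fin k → ℕ) (c : Fin k → Fin k → ℕ)
    (hCn : ∀ i, (Finset.univ.filter (fun v : V => ι v = i)).card = n i)
    (hDn : ∀ i, (Finset.univ.filter (fun w : W => κ w = i)).card = n i)
    (hCe : ∀ (j : Fin k) (v : V),
      (Finset.univ.filter (fun u : V => ι u = j ∧ G.Adj v u)).card = c (ι v) j)
    (hDe : ∀ (j : Fin k) (w : W),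
      (Finset.univ.filter (fun u : W => κ u = j ∧ H.Adj w u)).card = c (κ w) j)
    (H₁ : Finset W)
    (hcomp : ∀ u v : W, H.Adj u v → (u ∈ H₁ ↔ v ∈ H₁)) :
    ∀ gA gB : V, G.Adj gA gB →
      ∑ hA ∈ H₁, ∑ hB ∈ H₁, canonicalStrategy G H ι κ n c gA gB hA hB =
        ((Finset.univ.filter (fun w : W => κ w = ι gA ∧ w ∈ H₁)).card : ℝ) /
          (n (ι gA) : ℝ) :=
  stmt_17_general G H ι κ n c hCe hDe H₁ hcomp
end

section
/- Let P be any perfect non-signalling strategy for the (G, H) isomorphism game restricted to inputs in V(G), and let H be strongly transitive with witnessing set S and parameters (d_1, d_2, d_3), d-regular, with |V(H)| = n vertices. Define the averaged strategy P̃(h_A', h_B' | g_A, g_B) = (1/|S|) Σ_{φ ∈ S} P(φ^{-1}(h_A'), φ^{-1}(h_B') | g_A, g_B). Then P̃ has the explicit form: 1/n if g_A = g_B and h_A' = h_B'; 1/(2|E(H)|) if g_A ~ g_B and h_A' ~ h_B'; 1/(2|E(H^c)|) if g_A, g_B distinct non-adjacent and h_A', h_B' distinct non-adjacent; and 0 otherwise.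 -/
/-!
Regroup the average over `S` according to where each `e ∈ S` sends a pair: the output pair
`(u, v)` of `P` is weighted by `#{e ∈ S | e u = a ∧ e v = b}`. A perfect strategy only outputs
pairs of the same type (equal, adjacent, distinct non-adjacent) as the input pair, and on pairs of
a common type this count is the constant `dᵢ`, so the average is `dᵢ / |S|`. Counting `S` by the
image of one pair of that type gives `|S| = dᵢ · #(pairs of that type)`.
-/

open Finset
open scoped Classical

section

variable {W : Type*}

/-- Strong transitivity of `H` is this property for `(· = ·)`, `H.Adj` and `Hᶜ.Adj` at once. -/
structure PairTransitive (S : Finset (Equiv.Perm W)) (R : W → W → Prop) (c : ℕ) : Prop where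
  map_rel_iff : ∀ e ∈ S, ∀ u v, R (e u) (e v) ↔ R u v
  card_filter_apply_eq : ∀ u v a b, R u v → R a b →
    #(S.filter fun e => e u = a ∧ e v = b) = c

variable {S : Finset (Equiv.Perm W)} {R : W → W → Prop} {c : ℕ}

theorem PairTransitive.card_filter_apply_eq_ite (hS : PairTransitive S R c) {u v : W}
    (huv : R u v) (a b : W) :
    #(S.filter fun e => e u = a ∧ e v = b) = if R a b then c else 0 := by
  split_ifs with hab
  · exact hS.card_filter_apply_eq u v a b huv hab
  · refine card_eq_zero.mpr (filter_eq_empty_iff.mpr ?_)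
    rintro e he ⟨rfl, rfl⟩
    exact hab ((hS.map_rel_iff e he u v).mpr huv)

variable [Fintype W]

theorem sum_perm_symm_eq_sum_card_filter_mul (S : Finset (Equiv.Perm W)) (a b : W)
    (f : W → W → ℝ) :
    ∑ e ∈ S, f (e.symm a) (e.symm b) =
      ∑ u, ∑ v, (#(S.filter fun e => e u = a ∧ e v = b) : ℝ) * f u v := by
  have hpoint : ∀ e : Equiv.Perm W,
      f (e.symm a) (e.symm b) = ∑ u, ∑ v, if e u = a ∧ e v = b then f u v else 0 := by
    intro e
    simp [← Equiv.eq_symm_apply, ite_and]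
  simp_rw [hpoint, sum_comm (s := S), card_filter, Nat.cast_sum, sum_mul]
  refine sum_congr rfl fun u _ => sum_congr rfl fun v _ => sum_congr rfl fun e _ => ?_
  split_ifs <;> simp

theorem card_eq_sum_card_filter_apply_eq (S : Finset (Equiv.Perm W)) (u v : W) :
    #S = ∑ a, ∑ b, #(S.filter fun e => e u = a ∧ e v = b) := by
  rw [card_eq_sum_card_fiberwise (f := fun e : Equiv.Perm W => (e u, e v)) (t := univ)
    fun _ _ => mem_univ _, Fintype.sum_prod_type]
  simp only [Prod.ext_iff]

theorem card_filter_diagonal : #(univ.filter fun ((x, y) : W × W) ↦ x = y) = Fintype.card W := by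
  rw [card_filter, Fintype.sum_prod_type]
  simp

theorem SimpleGraph.card_filter_adj_eq_two_mul_card_edgeFinset (H : SimpleGraph W)
    [Fintype H.edgeSet] :
    #(univ.filter fun (x, y) ↦ H.Adj x y) = 2 * #H.edgeFinset := by
  convert H.two_mul_card_edgeFinset.symm

namespace PairTransitive

theorem card_eq_card_rel_mul (hS : PairTransitive S R c) {u v : W} (huv : R u v) :
    #S = #(univ.filter fun (x, y) ↦ R x y) * c := by
  rw [card_eq_sum_card_filter_apply_eq S u v]
  simp_rw [hS.card_filter_apply_eq_ite huv]
  rw [← Fintype.sum_prod_type', ← sum_filter, sum_const, smul_eq_mul]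

theorem sum_perm_symm_eq_of_support_rel (hS : PairTransitive S R c) (P : W → W → ℝ)
    (hP : ∑ u, ∑ v, P u v = 1) (hPR : ∀ u v, ¬ R u v → P u v = 0) (a b : W) :
    ∑ e ∈ S, P (e.symm a) (e.symm b) = if R a b then (c : ℝ) else 0 := by
  have hterm : ∀ u v, (#(S.filter fun e => e u = a ∧ e v = b) : ℝ) * P u v =
      (if R a b then (c : ℝ) else 0) * P u v := by
    intro u v
    by_cases huv : R u v
    · rw [hS.card_filter_apply_eq_ite huv]
      rw [Nat.cast_ite, Nat.cast_zero]
    · simp [hPR u v huv]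
  simp_rw [sum_perm_symm_eq_sum_card_filter_mul, hterm, ← mul_sum, hP, mul_one]

theorem inv_card_mul_sum_perm_symm_eq_of_support_rel (hS : PairTransitive S R c)
    (hne : S.Nonempty) (P : W → W → ℝ)
    (hP : ∑ u, ∑ v, P u v = 1) (hPR : ∀ u v, ¬ R u v → P u v = 0) (a b : W) :
    (#S : ℝ)⁻¹ * ∑ e ∈ S, P (e.symm a) (e.symm b) =
      if R a b then (#(univ.filter fun (x, y) ↦ R x y) : ℝ)⁻¹ else 0 := by
  rw [hS.sum_perm_symm_eq_of_support_rel P hP hPR]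
  split_ifs with hab
  · have hcard := hS.card_eq_card_rel_mul hab
    have hc0 : (c : ℝ) ≠ 0 := Nat.cast_ne_zero.mpr fun hc0 =>
      hne.card_pos.ne' (by rw [hcard, hc0, mul_zero])
    rw [hcard, Nat.cast_mul, mul_inv, mul_assoc, inv_mul_cancel₀ hc0, mul_one]
  · rw [mul_zero]

end PairTransitive

end

theorem stmt_19_general {V W : Type*} [Fintype V] [Fintype W]
    (G : SimpleGraph V) (H : SimpleGraph W)
    (P : V → V → W → W → ℝ)
    (hPsum : ∀ gA gB, ∑ hA : W, ∑ hB : W, P gA gB hA hB = 1)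
    (hPperfect : ∀ gA gB hA hB,
      ¬ ((gA = gB ↔ hA = hB) ∧ (G.Adj gA gB ↔ H.Adj hA hB) ∧
          ((gA ≠ gB ∧ ¬ G.Adj gA gB) ↔ (hA ≠ hB ∧ ¬ H.Adj hA hB))) →
      P gA gB hA hB = 0)
    (S : Finset (Equiv.Perm W))
    (hS : ∀ e ∈ S, ∀ u v : W, H.Adj (e u) (e v) ↔ H.Adj u v)
    (d₁ d₂ d₃ : ℕ) (hd₁ : 1 ≤ d₁)
    (h1 : ∀ h h' : W, (S.filter (fun e => e h = h')).card = d₁)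
    (h2 : ∀ h₁ h₂ h₁' h₂' : W, H.Adj h₁ h₂ → H.Adj h₁' h₂' →
      (S.filter (fun e => e h₁ = h₁' ∧ e h₂ = h₂')).card = d₂)
    (h3 : ∀ h₁ h₂ h₁' h₂' : W, Hᶜ.Adj h₁ h₂ → Hᶜ.Adj h₁' h₂' →
      (S.filter (fun e => e h₁ = h₁' ∧ e h₂ = h₂')).card = d₃) :
    ∀ (gA gB : V) (hA' hB' : W),
      (S.card : ℝ)⁻¹ * ∑ e ∈ S, P gA gB (e.symm hA') (e.symm hB') =
        if gA = gB ∧ hA' = hB' then ((Fintype.card W : ℝ))⁻¹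
        else if G.Adj gA gB ∧ H.Adj hA' hB' then
          ((2 * H.edgeFinset.card : ℕ) : ℝ)⁻¹
        else if gA ≠ gB ∧ ¬ G.Adj gA gB ∧ hA' ≠ hB' ∧ ¬ H.Adj hA' hB' then
          ((2 * Hᶜ.edgeFinset.card : ℕ) : ℝ)⁻¹
        else 0 := by
  intro gA gB hA' hB'
  have hSne : S.Nonempty := (card_pos.mp (h1 hA' hA' ▸ hd₁)).mono (filter_subset _ _)
  have hEq : PairTransitive S (· = ·) d₁ :=
    ⟨fun e _ _ _ => e.apply_eq_iff_eq, by
      rintro u _ a _ rfl rfl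
      simpa only [and_self] using h1 u a⟩
  have hAdj : PairTransitive S H.Adj d₂ := ⟨hS, h2⟩
  have hCompl : PairTransitive S Hᶜ.Adj d₃ :=
    ⟨fun e he u v => by simp only [SimpleGraph.compl_adj, hS e he, ne_eq, e.apply_eq_iff_eq],
      h3⟩
  rcases eq_or_ne gA gB with rfl | hg
  · rw [hEq.inv_card_mul_sum_perm_symm_eq_of_support_rel hSne _ (hPsum gA gA)
      fun u v huv => hPperfect _ _ _ _ fun h => huv (h.1.mp rfl), card_filter_diagonal]
    simp
  by_cases hgadj : G.Adj gA gB
  · rw [hAdj.inv_card_mul_sum_perm_symm_eq_of_support_rel hSne _ (hPsum gA gB)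
      fun u v huv => hPperfect _ _ _ _ fun h => huv (h.2.1.mp hgadj),
      SimpleGraph.card_filter_adj_eq_two_mul_card_edgeFinset]
    simp [hg, hgadj]
  · rw [hCompl.inv_card_mul_sum_perm_symm_eq_of_support_rel hSne _ (hPsum gA gB)
      fun u v huv => hPperfect _ _ _ _ fun h => huv (h.2.2.mp ⟨hg, hgadj⟩),
      SimpleGraph.card_filter_adj_eq_two_mul_card_edgeFinset]
    simp [hg, hgadj, SimpleGraph.compl_adj]

/-- Averaging any perfect non-signalling strategy for the `(G, H)` isomorphism
game (restricted to inputs in `V(G)`) over a witnessing set `S` of the strong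
transitivity of `H` yields the explicit canonical strategy:
`1/n` on matched equal pairs, `1/(2|E(H)|)` on matched adjacent pairs,
`1/(2|E(Hᶜ)|)` on matched distinct non-adjacent pairs, and `0` otherwise. -/
theorem stmt_19 {V W : Type*} [Fintype V] [Fintype W]
    (G : SimpleGraph V) (H : SimpleGraph W)
    (hVW : Fintype.card V = Fintype.card W)
    (P : V → V → W → W → ℝ)
    (hPnonneg : ∀ gA gB hA hB, 0 ≤ P gA gB hA hB)
    (hPsum : ∀ gA gB, ∑ hA : W, ∑ hB : W, P gA gB hA hB = 1)
    (hPperfect : ∀ gA gB hA hB,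
      ¬ ((gA = gB ↔ hA = hB) ∧ (G.Adj gA gB ↔ H.Adj hA hB) ∧
          ((gA ≠ gB ∧ ¬ G.Adj gA gB) ↔ (hA ≠ hB ∧ ¬ H.Adj hA hB))) →
      P gA gB hA hB = 0)
    (S : Finset (Equiv.Perm W))
    (hS : ∀ e ∈ S, ∀ u v : W, H.Adj (e u) (e v) ↔ H.Adj u v)
    (d₁ d₂ d₃ : ℕ) (hd₁ : 1 ≤ d₁) (hd₂ : 1 ≤ d₂) (hd₃ : 1 ≤ d₃)
    (h1 : ∀ h h' : W, (S.filter (fun e => e h = h')).card = d₁)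
    (h2 : ∀ h₁ h₂ h₁' h₂' : W, H.Adj h₁ h₂ → H.Adj h₁' h₂' →
      (S.filter (fun e => e h₁ = h₁' ∧ e h₂ = h₂')).card = d₂)
    (h3 : ∀ h₁ h₂ h₁' h₂' : W, Hᶜ.Adj h₁ h₂ → Hᶜ.Adj h₁' h₂' →
      (S.filter (fun e => e h₁ = h₁' ∧ e h₂ = h₂')).card = d₃)
    (d : ℕ) (hreg : ∀ w : W, (Finset.univ.filter (fun u => H.Adj w u)).card = d)
    (hedge : ∃ u v : W, H.Adj u v) (hnonedge : ∃ u v : W, u ≠ v ∧ ¬ H.Adj u v) :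
    ∀ (gA gB : V) (hA' hB' : W),
      (S.card : ℝ)⁻¹ * ∑ e ∈ S, P gA gB (e.symm hA') (e.symm hB') =
        if gA = gB ∧ hA' = hB' then ((Fintype.card W : ℝ))⁻¹
        else if G.Adj gA gB ∧ H.Adj hA' hB' then
          ((2 * H.edgeFinset.card : ℕ) : ℝ)⁻¹
        else if gA ≠ gB ∧ ¬ G.Adj gA gB ∧ hA' ≠ hB' ∧ ¬ H.Adj hA' hB' then
          ((2 * Hᶜ.edgeFinset.card : ℕ) : ℝ)⁻¹
        else 0 :=
  stmt_19_general G H P hPsum hPperfect S hS d₁ d₂ d₃ hd₁ h1 h2 h3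
end
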